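/- arXiv:1907.07097 — 2 statements merged into one kernel-verified Lean document; each statement's English description precedes it below -/
import Mathlib

section
/- Let q be odd. Let n ≥ 1, let M be an n×n symmetric matrix over O, u ∈ O^n, m ∈ O, and f(x) = xᵀMx + u·x + m. Let ϖ ∈ O be monic irreducible and k ≥ 1 an integer, and set S = Σ_{x} ψ(f(x)/ϖ^k), the sum over x ∈ O^n with |x| < |ϖ|^k. Then |S| ≤ |ϖ|^{nk/2}·√(#{x ∈ O^n : |x| < |ϖ|^k and ϖ^k divides every coordinate of M·x}). -/
set_option autoImplicit false

noncomputable section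

open Polynomial Matrix
open scoped Classical

variable {Fq : Type} [Field Fq] [Fintype Fq]

/-- The absolute value on `O = Fq[t]`: `|x| = q ^ deg x` for `x ≠ 0`, and `|0| = 0`. -/
def Oabs (x : Fq[X]) : ℝ := if x = 0 then 0 else (Fintype.card Fq : ℝ) ^ x.natDegree

/-- The maximum norm on pairs of polynomials. -/
def Oabs2 (a : Fq[X] × Fq[X]) : ℝ := max (Oabs a.1) (Oabs a.2)

/-- A pair `c = (c₁, c₂)` is primitive if `gcd(c₁,c₂) = 1` and either `c₁` is monic,
or `c₁ = 0` and `c₂` is monic. -/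
def Primitive (c : Fq[X] × Fq[X]) : Prop :=
  IsCoprime c.1 c.2 ∧ (c.1.Monic ∨ (c.1 = 0 ∧ c.2.Monic))

/-- `gcd(a, b, r) = 1`: every common divisor of `a`, `b` and `r` is a unit. -/
def CoprimeTriple (a b r : Fq[X]) : Prop :=
  ∀ p : Fq[X], p ∣ a → p ∣ b → p ∣ r → IsUnit p

/-- `a/r` lies on the generalised line `L(d·c)`: there is `k` with
`d(c₁a₁ + c₂a₂) = k·r` and `gcd(d,k) = 1`. -/
def OnLine (d : Fq[X]) (c : Fq[X] × Fq[X]) (r : Fq[X]) (a : Fq[X] × Fq[X]) : Prop :=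
  ∃ k : Fq[X], d * (c.1 * a.1 + c.2 * a.2) = k * r ∧ IsCoprime d k

/-- The embedding of `O = Fq[t]` into `K_∞ = Fq((1/t))`, realised as formal Laurent
series in the variable `u = t⁻¹`; the polynomial variable `t` is sent to `u⁻¹`. -/
def OtoK : Fq[X] →+* LaurentSeries Fq :=
  Polynomial.eval₂RingHom HahnSeries.C (HahnSeries.single (-1 : ℤ) 1)

/-- The absolute value on `K_∞`: `|x| = q^{deg x}`, i.e. `q^{-ord_u x}` where `u = t⁻¹`. -/
def Kabs (x : LaurentSeries Fq) : ℝ :=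
  if x = 0 then 0 else (Fintype.card Fq : ℝ) ^ (-x.order)

/-!
Put `W = ϖ ^ k`. The box `|x| < |ϖ|^k` is a system of representatives of `(O/W)^n`, and since `ψ`
is trivial on `O`, `a ↦ ψ(a/W)` is a well-defined additive character `χ` of `O/W`. It is
primitive: if `W ∤ a` and `r = a mod W ≠ 0`, multiplying `r` by a suitable monomial `p` gives
`r p / W = c/t + O(t⁻²)` for any prescribed `c`, and the conductor conditions on `ψ` provide a `c`
with `ψ(c/t) ≠ 1`. For a primitive character of a finite ring in which `2` is a unit, expanding
`|S|²` and substituting `x = y + h` leaves, for each `h`, a complete sum of `χ(2 (Mh)·y)` over `y`,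
which vanishes unless `Mh = 0`; hence `|S|² ≤ |O/W|^n · #{h : Mh = 0}` and `|O/W| = |ϖ|^k`.
-/

open ComplexConjugate

theorem AddChar.map_sum {A M ι : Type*} [AddCommMonoid A] [CommMonoid M] (ψ : AddChar A M)
    (s : Finset ι) (f : ι → A) : ψ (∑ i ∈ s, f i) = ∏ i ∈ s, ψ (f i) :=
  map_prod ψ.toMonoidHom (fun i => Multiplicative.ofAdd (f i)) s

theorem Matrix.IsSymm.quadratic_add {R ι : Type*} [CommRing R] [Fintype ι] {M : Matrix ι ι R}
    (hM : M.IsSymm) (u : ι → R) (m : R) (y h : ι → R) :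
    (y + h) ⬝ᵥ M *ᵥ (y + h) + u ⬝ᵥ (y + h) + m
      = (y ⬝ᵥ M *ᵥ y + u ⬝ᵥ y + m) + (h ⬝ᵥ M *ᵥ h + u ⬝ᵥ h) + ((2 : R) • (M *ᵥ h)) ⬝ᵥ y := by
  have hsymm : h ⬝ᵥ M *ᵥ y = M *ᵥ h ⬝ᵥ y := by
    rw [dotProduct_mulVec, ← mulVec_transpose, hM.eq, dotProduct_comm]
  simp only [mulVec_add, dotProduct_add, add_dotProduct, smul_dotProduct, hsymm,
    dotProduct_comm y (M *ᵥ h), smul_eq_mul]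
  ring

section QuadraticSum

variable {R : Type*} [CommRing R] [Fintype R] {ι : Type*} [Fintype ι] [DecidableEq ι]

theorem AddChar.sum_apply_dotProduct {χ : AddChar R ℂ} (hχ : χ.IsPrimitive) (c : ι → R) :
    ∑ y : ι → R, χ (c ⬝ᵥ y) = if c = 0 then (Fintype.card R : ℂ) ^ Fintype.card ι else 0 := by
  have hprod (y : ι → R) : χ (c ⬝ᵥ y) = ∏ i, χ (y i * c i) := by
    rw [dotProduct, AddChar.map_sum]
    simp only [mul_comm]
  simp_rw [hprod]
  rw [← Fintype.prod_sum (fun i t => χ (t * c i))]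
  simp_rw [AddChar.sum_mulShift _ hχ]
  push_cast
  rw [Finset.prod_ite_zero]
  simp [funext_iff]

theorem norm_sum_addChar_quadratic_sq_le {χ : AddChar R ℂ} (hχ : χ.IsPrimitive)
    (h2 : IsUnit (2 : R)) {M : Matrix ι ι R} (hM : M.IsSymm) (u : ι → R) (m : R) :
    ‖∑ x, χ (x ⬝ᵥ M *ᵥ x + u ⬝ᵥ x + m)‖ ^ 2
      ≤ Fintype.card R ^ Fintype.card ι * {x | M *ᵥ x = 0}.ncard := by
  set Q : (ι → R) → R := fun x => x ⬝ᵥ M *ᵥ x + u ⬝ᵥ x + m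
  have hdiff (y h : ι → R) : χ (Q (y + h)) * conj (χ (Q y))
      = χ (h ⬝ᵥ M *ᵥ h + u ⬝ᵥ h) * χ (((2 : R) • (M *ᵥ h)) ⬝ᵥ y) := by
    rw [← AddChar.map_neg_eq_conj, ← AddChar.map_add_eq_mul, ← AddChar.map_add_eq_mul]
    simp only [Q, hM.quadratic_add]
    ring_nf
  have hsq : ((‖∑ x, χ (Q x)‖ ^ 2 : ℝ) : ℂ)
      = ∑ h, χ (h ⬝ᵥ M *ᵥ h + u ⬝ᵥ h) *
          if (2 : R) • (M *ᵥ h) = 0 then (Fintype.card R : ℂ) ^ Fintype.card ι else 0 := by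
    rw [← Complex.normSq_eq_norm_sq, ← Complex.mul_conj, map_sum, Finset.sum_mul_sum,
      Finset.sum_comm]
    calc ∑ y, ∑ x, χ (Q x) * conj (χ (Q y))
        = ∑ y, ∑ h, χ (Q (y + h)) * conj (χ (Q y)) :=
          Finset.sum_congr rfl fun y _ =>
            (Fintype.sum_equiv (Equiv.addLeft y) _ _ fun _ => rfl).symm
      _ = ∑ h, χ (h ⬝ᵥ M *ᵥ h + u ⬝ᵥ h) * ∑ y, χ (((2 : R) • (M *ᵥ h)) ⬝ᵥ y) := by
          simp_rw [hdiff, Finset.mul_sum]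
          exact Finset.sum_comm
      _ = _ := by simp_rw [AddChar.sum_apply_dotProduct hχ]
  have hterm (h : ι → R) : ‖χ (h ⬝ᵥ M *ᵥ h + u ⬝ᵥ h) *
      if (2 : R) • (M *ᵥ h) = 0 then (Fintype.card R : ℂ) ^ Fintype.card ι else 0‖
        = if M *ᵥ h = 0 then (Fintype.card R : ℝ) ^ Fintype.card ι else 0 := by
    rw [norm_mul, AddChar.norm_apply, one_mul]
    simp only [h2.smul_eq_zero]
    split_ifs <;> simp
  calc ‖∑ x, χ (Q x)‖ ^ 2 = ‖((‖∑ x, χ (Q x)‖ ^ 2 : ℝ) : ℂ)‖ := by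
        rw [Complex.norm_of_nonneg (by positivity)]
    _ ≤ ∑ h, if M *ᵥ h = 0 then (Fintype.card R : ℝ) ^ Fintype.card ι else 0 := by
        rw [hsq]
        exact (norm_sum_le _ _).trans_eq (Finset.sum_congr rfl fun h _ => hterm h)
    _ = _ := by
        rw [Finset.sum_ite, Finset.sum_const_zero, add_zero, Finset.sum_const, nsmul_eq_mul,
          mul_comm, Set.ncard_eq_toFinset_card', Set.toFinset_ofPred]

end QuadraticSum

section Embedding

variable {F : Type} [Field F]

theorem OtoK_coeff (p : F[X]) (j : ℤ) :
    (OtoK p).coeff j = if j ≤ 0 then p.coeff (-j).toNat else 0 := by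
  induction p using Polynomial.induction_on' with
  | add p r hp hr => rw [map_add, HahnSeries.coeff_add, hp, hr]; split <;> simp
  | monomial i a =>
    have hmon : OtoK (monomial i a) = HahnSeries.single (-(i : ℤ)) a := by
      simp [OtoK, HahnSeries.single_pow, HahnSeries.C_apply]
    rw [hmon, HahnSeries.coeff_single, coeff_monomial]
    by_cases h : j = -(i : ℤ)
    · subst h; simp
    · rw [if_neg h]
      split_ifs <;> first | rfl | omega

theorem OtoK_ne_zero {p : F[X]} (hp : p ≠ 0) : OtoK p ≠ 0 := fun h => by
  have := OtoK_coeff p (-(p.natDegree : ℤ))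
  simp only [h, HahnSeries.coeff_zero, Left.neg_nonpos_iff, Nat.cast_nonneg, if_true, neg_neg,
    Int.toNat_natCast] at this
  exact leadingCoeff_ne_zero.mpr hp this.symm

theorem OtoK_order {p : F[X]} (hp : p ≠ 0) : (OtoK p).order = -(p.natDegree : ℤ) := by
  have hlead : (OtoK p).coeff (-(p.natDegree : ℤ)) ≠ 0 := by
    simpa [OtoK_coeff] using leadingCoeff_ne_zero.mpr hp
  refine le_antisymm (HahnSeries.order_le_of_coeff_ne_zero hlead) ?_
  by_contra! hlt
  refine HahnSeries.coeff_order_eq_zero.not.mpr (OtoK_ne_zero hp) ?_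
  rw [OtoK_coeff]
  split_ifs
  · exact coeff_eq_zero_of_natDegree_lt (by omega)
  · rfl

theorem OtoK_C_div_X (c : F) : OtoK (C c) / OtoK X = HahnSeries.single 1 c := by
  rw [div_eq_iff (OtoK_ne_zero X_ne_zero)]
  simp [OtoK, HahnSeries.single_mul_single, HahnSeries.C_apply]

end Embedding

section Absolute

local notation "q" => (Fintype.card Fq : ℝ)

theorem one_lt_card_real : (1 : ℝ) < q := by exact_mod_cast Fintype.one_lt_card

theorem Oabs_of_ne_zero {p : Fq[X]} (hp : p ≠ 0) : Oabs p = q ^ p.natDegree := if_neg hp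

theorem Oabs_pos {p : Fq[X]} (hp : p ≠ 0) : 0 < Oabs p := by
  rw [Oabs_of_ne_zero hp]
  exact pow_pos (zero_lt_one.trans one_lt_card_real) _

theorem Oabs_mul (p r : Fq[X]) : Oabs (p * r) = Oabs p * Oabs r := by
  rcases eq_or_ne p 0 with rfl | hp
  · simp [Oabs]
  rcases eq_or_ne r 0 with rfl | hr
  · simp [Oabs]
  rw [Oabs_of_ne_zero (mul_ne_zero hp hr), Oabs_of_ne_zero hp, Oabs_of_ne_zero hr,
    natDegree_mul hp hr, pow_add]

theorem Oabs_pow (p : Fq[X]) (k : ℕ) : Oabs (p ^ k) = Oabs p ^ k := by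
  induction k with
  | zero => simp [Oabs]
  | succ k ih => rw [pow_succ, Oabs_mul, ih, pow_succ]

theorem Oabs_X : Oabs (X : Fq[X]) = q := by
  rw [Oabs_of_ne_zero X_ne_zero, natDegree_X, pow_one]

theorem Oabs_lt_Oabs_iff {p r : Fq[X]} (hr : r ≠ 0) : Oabs p < Oabs r ↔ p.degree < r.degree := by
  rcases eq_or_ne p 0 with rfl | hp
  · rw [show Oabs (0 : Fq[X]) = 0 from if_pos rfl, degree_zero]
    exact iff_of_true (Oabs_pos hr) (bot_lt_iff_ne_bot.mpr (degree_ne_bot.mpr hr))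
  rw [Oabs_of_ne_zero hp, Oabs_of_ne_zero hr, pow_lt_pow_iff_right₀ one_lt_card_real,
    degree_eq_natDegree hp, degree_eq_natDegree hr, Nat.cast_lt]

theorem Kabs_OtoK (p : Fq[X]) : Kabs (OtoK p) = Oabs p := by
  rcases eq_or_ne p 0 with rfl | hp
  · simp [Kabs, Oabs]
  rw [Kabs, if_neg (OtoK_ne_zero hp), OtoK_order hp, neg_neg, zpow_natCast, Oabs_of_ne_zero hp]

theorem Kabs_mul (x y : LaurentSeries Fq) : Kabs (x * y) = Kabs x * Kabs y := by
  rcases eq_or_ne x 0 with rfl | hx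
  · simp [Kabs]
  rcases eq_or_ne y 0 with rfl | hy
  · simp [Kabs]
  rw [Kabs, Kabs, Kabs, if_neg (mul_ne_zero hx hy), if_neg hx, if_neg hy,
    HahnSeries.order_mul hx hy, neg_add, zpow_add₀ (by positivity)]

theorem Kabs_div (x y : LaurentSeries Fq) : Kabs (x / y) = Kabs x / Kabs y := by
  rcases eq_or_ne y 0 with rfl | hy
  · simp [Kabs]
  have hy' : Kabs y ≠ 0 := by rw [Kabs, if_neg hy]; positivity
  rw [eq_div_iff hy', ← Kabs_mul, div_mul_cancel₀ _ hy]

theorem Kabs_le_zpow_iff {w : LaurentSeries Fq} (j : ℤ) :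
    Kabs w ≤ q ^ (-j) ↔ ∀ i < j, w.coeff i = 0 := by
  rcases eq_or_ne w 0 with rfl | hw
  · simp only [Kabs, if_pos, HahnSeries.coeff_zero, implies_true, iff_true]
    positivity
  rw [Kabs, if_neg hw, zpow_le_zpow_iff_right₀ one_lt_card_real, neg_le_neg_iff]
  refine ⟨fun h i hi => HahnSeries.coeff_eq_zero_of_lt_order (by omega), fun h => ?_⟩
  by_contra! hlt
  exact HahnSeries.coeff_order_eq_zero.not.mpr hw (h _ hlt)

theorem Kabs_le_zpow_of_lt {w : LaurentSeries Fq} {j : ℤ} (h : Kabs w < q ^ (j + 1)) :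
    Kabs w ≤ q ^ j := by
  rcases eq_or_ne w 0 with rfl | hw
  · rw [Kabs, if_pos rfl]; positivity
  rw [Kabs, if_neg hw] at h ⊢
  rw [zpow_lt_zpow_iff_right₀ one_lt_card_real] at h
  exact zpow_le_zpow_right₀ one_lt_card_real.le (by omega)

end Absolute

theorem AdjoinRoot.finite_of_monic {R : Type*} [CommRing R] [Finite R] {g : R[X]}
    (hg : g.Monic) : Finite (AdjoinRoot g) :=
  Finite.of_equiv _ (powerBasis' hg).basis.equivFun.toEquiv.symm

theorem AdjoinRoot.natCard_of_monic {R : Type*} [CommRing R] [Fintype R] {g : R[X]}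
    (hg : g.Monic) : Nat.card (AdjoinRoot g) = Fintype.card R ^ g.natDegree := by
  rw [Nat.card_congr (powerBasis' hg).basis.equivFun.toEquiv, Nat.card_fun,
    Nat.card_eq_fintype_card, Nat.card_eq_fintype_card, Fintype.card_fin, powerBasis'_dim]

theorem isUnit_two_of_odd_card {A : Type*} [Ring A] [Algebra Fq A]
    (hodd : Odd (Fintype.card Fq)) : IsUnit (2 : A) := by
  have hchar : ringChar Fq ≠ 2 := fun h => by
    have := FiniteField.even_card_iff_char_two.mp h
    have := Nat.odd_iff.mp hodd
    omega
  simpa only [map_ofNat] using (Ring.two_ne_zero hchar).isUnit.map (algebraMap Fq A)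

section ResidueCharacter

variable {F : Type} [Field F] {ψ : AddChar (LaurentSeries F) ℂ}

theorem psi_div_eq_of_dvd_sub (hψ3 : ∀ p : F[X], ψ (OtoK p) = 1) {W b b' : F[X]} (hW : W ≠ 0)
    (h : W ∣ b - b') : ψ (OtoK b / OtoK W) = ψ (OtoK b' / OtoK W) := by
  obtain ⟨s, hs⟩ := h
  rw [show b = b' + W * s by linear_combination hs, map_add, map_mul, add_div,
    mul_div_cancel_left₀ _ (OtoK_ne_zero hW), AddChar.map_add_eq_mul, hψ3, mul_one]

/-- The character `a mod W ↦ ψ(a / W)` of `O / (W)`, evaluated on the representative `a %ₘ W`. -/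
def residueChar (ψ : AddChar (LaurentSeries F) ℂ) {W : F[X]} (hW : W.Monic) :
    AddChar (AdjoinRoot W) ℂ :=
  ψ.compAddMonoidHom <| ((AddMonoidHom.mulRight (OtoK W)⁻¹).comp OtoK.toAddMonoidHom).comp
    (AdjoinRoot.modByMonicHom hW).toAddMonoidHom

theorem residueChar_mk (hψ3 : ∀ p : F[X], ψ (OtoK p) = 1) {W : F[X]} (hW : W.Monic)
    (a : F[X]) : residueChar ψ hW (AdjoinRoot.mk W a) = ψ (OtoK a / OtoK W) := by
  refine (psi_div_eq_of_dvd_sub hψ3 hW.ne_zero ?_ : ψ (OtoK (a %ₘ W) / OtoK W) = _)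
  rw [modByMonic_eq_sub_mul_div, sub_sub_cancel_left]
  exact (dvd_mul_right _ _).neg_right

end ResidueCharacter

section Character

local notation "q" => (Fintype.card Fq : ℝ)

variable {ψ : AddChar (LaurentSeries Fq) ℂ}

theorem psi_eq_of_Kabs_sub_lt (hψ4 : ∀ x, Kabs x ≤ q ^ (-2 : ℤ) → ψ x = 1)
    {x y : LaurentSeries Fq} (h : Kabs (x - y) < q ^ (-1 : ℤ)) : ψ x = ψ y := by
  rw [← sub_add_cancel x y, AddChar.map_add_eq_mul,
    hψ4 _ (Kabs_le_zpow_of_lt (by rwa [show (-2 : ℤ) + 1 = -1 by norm_num])), one_mul]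

theorem exists_psi_C_div_X_ne_one (hψ4 : ∀ x, Kabs x ≤ q ^ (-2 : ℤ) → ψ x = 1)
    (hψ5 : ∃ x, Kabs x ≤ q ^ (-1 : ℤ) ∧ ψ x ≠ 1) : ∃ c : Fq, ψ (OtoK (C c) / OtoK X) ≠ 1 := by
  obtain ⟨z, hz, hψz⟩ := hψ5
  refine ⟨z.coeff 1, fun h => hψz ?_⟩
  rw [← h, OtoK_C_div_X, ← sub_add_cancel z (HahnSeries.single 1 (z.coeff 1)),
    AddChar.map_add_eq_mul, hψ4, one_mul, sub_add_cancel]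
  rw [Kabs_le_zpow_iff] at hz ⊢
  intro i hi
  rw [HahnSeries.coeff_sub, HahnSeries.coeff_single]
  rcases lt_or_eq_of_le (show i ≤ 1 by omega) with hi | rfl
  · rw [hz i hi, if_neg hi.ne, sub_zero]
  · rw [if_pos rfl, sub_self]

theorem psi_div_eq_psi_C_div_X (hψ4 : ∀ x, Kabs x ≤ q ^ (-2 : ℤ) → ψ x = 1) {A W : Fq[X]}
    (hW : W.Monic) (hA : A.natDegree + 1 = W.natDegree) :
    ψ (OtoK A / OtoK W) = ψ (OtoK (C A.leadingCoeff) / OtoK X) := by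
  rcases eq_or_ne A 0 with rfl | hA0
  · simp
  set N := A * X - C A.leadingCoeff * W
  have hAX : (A * X).degree = W.degree := by
    rw [degree_mul_X, degree_eq_natDegree hA0, degree_eq_natDegree hW.ne_zero, ← hA]
    rfl
  have hN : N.degree < W.degree := by
    rw [← hAX]
    refine degree_sub_lt_left ?_ (mul_ne_zero hA0 X_ne_zero) ?_
    · rw [hAX, degree_C_mul (leadingCoeff_ne_zero.mpr hA0)]
    · rw [leadingCoeff_mul_X, leadingCoeff_mul, leadingCoeff_C, hW.leadingCoeff, mul_one]
  have hdiff : OtoK A / OtoK W - OtoK (C A.leadingCoeff) / OtoK X = OtoK N / OtoK (W * X) := by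
    have := OtoK_ne_zero hW.ne_zero
    have := OtoK_ne_zero (X_ne_zero : (X : Fq[X]) ≠ 0)
    simp only [N, map_sub, map_mul]
    field_simp
  apply psi_eq_of_Kabs_sub_lt hψ4
  rw [hdiff, Kabs_div, Kabs_OtoK, Kabs_OtoK, Oabs_mul, Oabs_X, _root_.zpow_neg_one,
    div_lt_iff₀ (mul_pos (Oabs_pos hW.ne_zero) (zero_lt_one.trans one_lt_card_real)),
    mul_comm (Oabs W), ← mul_assoc, inv_mul_cancel₀ (zero_lt_one.trans one_lt_card_real).ne',
    one_mul]
  exact (Oabs_lt_Oabs_iff hW.ne_zero).mpr hN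

theorem exists_psi_mul_div_ne_one (hψ3 : ∀ p : Fq[X], ψ (OtoK p) = 1)
    (hψ4 : ∀ x, Kabs x ≤ q ^ (-2 : ℤ) → ψ x = 1) (hψ5 : ∃ x, Kabs x ≤ q ^ (-1 : ℤ) ∧ ψ x ≠ 1)
    {W a : Fq[X]} (hW : W.Monic) (ha : ¬ W ∣ a) : ∃ p, ψ (OtoK (a * p) / OtoK W) ≠ 1 := by
  obtain ⟨c, hc⟩ := exists_psi_C_div_X_ne_one hψ4 hψ5
  have hc0 : c ≠ 0 := by rintro rfl; simp at hc
  set r := a %ₘ W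
  have hr0 : r ≠ 0 := (modByMonic_eq_zero_iff_dvd hW).not.mpr ha
  have hr : r.natDegree < W.natDegree := natDegree_lt_natDegree hr0 (degree_modByMonic_lt a hW)
  -- `r * p` has degree `deg W - 1` and leading coefficient `c`
  set p := C (c / r.leadingCoeff) * X ^ (W.natDegree - 1 - r.natDegree)
  have hp0 : c / r.leadingCoeff ≠ 0 := div_ne_zero hc0 (leadingCoeff_ne_zero.mpr hr0)
  refine ⟨p, ?_⟩
  rw [psi_div_eq_of_dvd_sub hψ3 hW.ne_zero (b' := r * p) ?_, psi_div_eq_psi_C_div_X hψ4 hW]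
  · rwa [leadingCoeff_mul, leadingCoeff_C_mul_X_pow,
      mul_div_cancel₀ _ (leadingCoeff_ne_zero.mpr hr0)]
  · rw [natDegree_mul hr0 (by simpa [p] using hp0), natDegree_C_mul_X_pow _ _ hp0]
    omega
  · rw [← sub_mul]
    refine (Dvd.intro (a /ₘ W) ?_).mul_right p
    linear_combination (modByMonic_add_div a W : r + W * (a /ₘ W) = a)

theorem residueChar_isPrimitive (hψ3 : ∀ p : Fq[X], ψ (OtoK p) = 1)
    (hψ4 : ∀ x, Kabs x ≤ q ^ (-2 : ℤ) → ψ x = 1) (hψ5 : ∃ x, Kabs x ≤ q ^ (-1 : ℤ) ∧ ψ x ≠ 1)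
    {W : Fq[X]} (hW : W.Monic) : (residueChar ψ hW).IsPrimitive := by
  intro r hr hshift
  induction r using AdjoinRoot.induction_on with | ih a =>
  obtain ⟨p, hp⟩ :=
    exists_psi_mul_div_ne_one hψ3 hψ4 hψ5 hW fun h => hr (AdjoinRoot.mk_eq_zero.mpr h)
  have := DFunLike.congr_fun hshift (AdjoinRoot.mk W p)
  rw [AddChar.mulShift_apply, ← map_mul, residueChar_mk hψ3, AddChar.one_apply] at this
  exact hp this

end Character

section Transfer

variable {ι : Type*} {W : Fq[X]}

theorem setOf_Oabs_lt_eq_range (hW : W.Monic) :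
    {x : ι → Fq[X] | ∀ i, Oabs (x i) < Oabs W}
      = Set.range (AdjoinRoot.modByMonicHom hW ∘ · : (ι → AdjoinRoot W) → ι → Fq[X]) := by
  ext x
  simp only [Set.mem_ofPred_eq, Set.mem_range, Oabs_lt_Oabs_iff hW.ne_zero]
  constructor
  · refine fun hx => ⟨AdjoinRoot.mk W ∘ x, funext fun i => ?_⟩
    exact (modByMonic_eq_self_iff hW).mpr (hx i)
  · rintro ⟨v, rfl⟩ i
    rw [Function.comp_apply]
    induction v i using AdjoinRoot.induction_on with | ih p =>
    exact degree_modByMonic_lt p hW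

theorem ncard_setOf_Oabs_lt_dvd_mulVec [Fintype ι] (hW : W.Monic) (M : Matrix ι ι Fq[X]) :
    {x : ι → Fq[X] | (∀ i, Oabs (x i) < Oabs W) ∧ ∀ i, W ∣ M.mulVec x i}.ncard
      = {v : ι → AdjoinRoot W | M.map (AdjoinRoot.mk W) *ᵥ v = 0}.ncard := by
  rw [← Set.ncard_image_of_injective _ (AdjoinRoot.mk_leftInverse hW).injective.comp_left,
    Set.ofPred_and, setOf_Oabs_lt_eq_range hW, ← Set.image_preimage_eq_range_inter]
  congr 2
  ext v
  simp only [Set.mem_preimage, Set.mem_ofPred_eq, funext_iff, Pi.zero_apply,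
    ← AdjoinRoot.mk_eq_zero, RingHom.map_mulVec, Function.comp_def,
    AdjoinRoot.mk_leftInverse hW _]

theorem finsum_setOf_Oabs_lt_eq_sum {ψ : AddChar (LaurentSeries Fq) ℂ}
    (hψ3 : ∀ p : Fq[X], ψ (OtoK p) = 1) [Fintype ι] [DecidableEq ι] [Fintype (AdjoinRoot W)]
    (hW : W.Monic) (M : Matrix ι ι Fq[X]) (u : ι → Fq[X]) (m : Fq[X]) :
    ∑ᶠ x ∈ {x : ι → Fq[X] | ∀ i, Oabs (x i) < Oabs W},
        ψ (OtoK (x ⬝ᵥ M *ᵥ x + u ⬝ᵥ x + m) / OtoK W)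
      = ∑ v, residueChar ψ hW
          (v ⬝ᵥ M.map (AdjoinRoot.mk W) *ᵥ v + (AdjoinRoot.mk W ∘ u) ⬝ᵥ v + AdjoinRoot.mk W m) := by
  rw [setOf_Oabs_lt_eq_range hW,
    finsum_mem_range (AdjoinRoot.mk_leftInverse hW).injective.comp_left, finsum_eq_sum_of_fintype]
  refine Finset.sum_congr rfl fun v _ => ?_
  set mk := AdjoinRoot.mk W
  set x := AdjoinRoot.modByMonicHom hW ∘ v
  have hx : mk ∘ x = v := funext fun i => AdjoinRoot.mk_leftInverse hW (v i)
  have hMx : mk ∘ (M *ᵥ x) = M.map mk *ᵥ (mk ∘ x) := funext (RingHom.map_mulVec mk M x)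
  rw [← hx, ← hMx, ← RingHom.map_dotProduct, ← RingHom.map_dotProduct, ← map_add, ← map_add,
    residueChar_mk hψ3 hW]

end Transfer

theorem Real.sqrt_pow_pow_mul {a : ℝ} (ha : 0 ≤ a) (N : ℝ) (n k : ℕ) :
    √((a ^ k) ^ n * N) = a ^ ((n * k : ℝ) / 2) * √N := by
  rw [Real.sqrt_mul (by positivity), ← pow_mul, Real.sqrt_eq_rpow, ← Real.rpow_natCast,
    ← Real.rpow_mul ha, Nat.cast_mul]
  ring_nf

theorem stmt_4_general (Fq : Type) [Field Fq] [Fintype Fq] (hodd : Odd (Fintype.card Fq))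
    (n : ℕ)
    (M : Matrix (Fin n) (Fin n) Fq[X]) (hM : M.IsSymm)
    (u : Fin n → Fq[X]) (m : Fq[X])
    (ϖ : Fq[X]) (hmon : ϖ.Monic)
    (k : ℕ)
    (ψ : LaurentSeries Fq → ℂ)
    (hψ2 : ∀ x y, ψ (x + y) = ψ x * ψ y)
    (hψ3 : ∀ p : Fq[X], ψ (OtoK p) = 1)
    (hψ4 : ∀ x, Kabs x ≤ (Fintype.card Fq : ℝ) ^ (-2 : ℤ) → ψ x = 1)
    (hψ5 : ∃ x, Kabs x ≤ (Fintype.card Fq : ℝ) ^ (-1 : ℤ) ∧ ψ x ≠ 1) :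
    ‖(∑ᶠ x ∈ {x : Fin n → Fq[X] | ∀ i, Oabs (x i) < Oabs ϖ ^ k},
        ψ (OtoK (x ⬝ᵥ M.mulVec x + u ⬝ᵥ x + m) / OtoK ϖ ^ k))‖
    ≤ Oabs ϖ ^ (((n : ℝ) * (k : ℝ)) / 2) *
        Real.sqrt (({x : Fin n → Fq[X] |
          (∀ i, Oabs (x i) < Oabs ϖ ^ k) ∧ ∀ i, ϖ ^ k ∣ M.mulVec x i}.ncard : ℝ)) := by
  have hW : (ϖ ^ k).Monic := hmon.pow k
  let χ : AddChar (LaurentSeries Fq) ℂ :=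
    { toFun := ψ
      map_zero_eq_one' := hψ4 0 (by rw [Kabs, if_pos rfl]; positivity)
      map_add_eq_mul' := hψ2 }
  have := AdjoinRoot.finite_of_monic hW
  let _ := Fintype.ofFinite (AdjoinRoot (ϖ ^ k))
  have hcard : (Fintype.card (AdjoinRoot (ϖ ^ k)) : ℝ) = Oabs ϖ ^ k := by
    rw [← Nat.card_eq_fintype_card, AdjoinRoot.natCard_of_monic hW, ← Oabs_pow,
      Oabs_of_ne_zero hW.ne_zero, Nat.cast_pow]
  have hsq := norm_sum_addChar_quadratic_sq_le (residueChar_isPrimitive (ψ := χ) hψ3 hψ4 hψ5 hW)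
    (isUnit_two_of_odd_card hodd) (hM.map (AdjoinRoot.mk _)) (AdjoinRoot.mk _ ∘ u)
    (AdjoinRoot.mk _ m)
  rw [hcard, Fintype.card_fin] at hsq
  rw [← Oabs_pow, ← map_pow OtoK, ncard_setOf_Oabs_lt_dvd_mulVec hW,
    ← Real.sqrt_pow_pow_mul (Oabs_pos hmon.ne_zero).le]
  calc _ = _ := congrArg norm (finsum_setOf_Oabs_lt_eq_sum (ψ := χ) hψ3 hW M u m)
    _ ≤ _ := (le_abs_self _).trans (Real.abs_le_sqrt hsq)

/-- Squaring bound for complete quadratic exponential sums: for a quadratic polynomial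
`f(x) = xᵀMx + u·x + m` and a monic irreducible `ϖ`,
`|Σ_{|x|<|ϖ|^k} ψ(f(x)/ϖ^k)| ≤ |ϖ|^{nk/2}·√(#{x mod ϖ^k : ϖ^k ∣ Mx})`. -/
theorem stmt_4 (Fq : Type) [Field Fq] [Fintype Fq] (hodd : Odd (Fintype.card Fq))
    (n : ℕ) (hn : 1 ≤ n)
    (M : Matrix (Fin n) (Fin n) Fq[X]) (hM : M.IsSymm)
    (u : Fin n → Fq[X]) (m : Fq[X])
    (ϖ : Fq[X]) (hmon : ϖ.Monic) (hirr : Irreducible ϖ)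
    (k : ℕ) (hk : 1 ≤ k)
    (ψ : LaurentSeries Fq → ℂ)
    (hψ1 : ∀ x, ‖ψ x‖ = 1)
    (hψ2 : ∀ x y, ψ (x + y) = ψ x * ψ y)
    (hψ3 : ∀ p : Fq[X], ψ (OtoK p) = 1)
    (hψ4 : ∀ x, Kabs x ≤ (Fintype.card Fq : ℝ) ^ (-2 : ℤ) → ψ x = 1)
    (hψ5 : ∃ x, Kabs x ≤ (Fintype.card Fq : ℝ) ^ (-1 : ℤ) ∧ ψ x ≠ 1) :
    ‖(∑ᶠ x ∈ {x : Fin n → Fq[X] | ∀ i, Oabs (x i) < Oabs ϖ ^ k},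
        ψ (OtoK (x ⬝ᵥ M.mulVec x + u ⬝ᵥ x + m) / OtoK ϖ ^ k))‖
    ≤ Oabs ϖ ^ (((n : ℝ) * (k : ℝ)) / 2) *
        Real.sqrt (({x : Fin n → Fq[X] |
          (∀ i, Oabs (x i) < Oabs ϖ ^ k) ∧ ∀ i, ϖ ^ k ∣ M.mulVec x i}.ncard : ℝ)) :=
  stmt_4_general Fq hodd n M hM u m ϖ hmon k ψ hψ2 hψ3 hψ4 hψ5
end
end

section
/- Let r ∈ O be monic and a = (a1,a2) ∈ O² with |a| < |r| and gcd(a1,a2,r) = 1. Then there exist a primitive pair c = (c1,c2) ∈ O², a monic d ∈ O, and k ∈ O such that |d·c1| ≤ |r|^{1/2}, |d·c2| < |r|^{1/2}, d(c1·a1 + c2·a2) = k·r, and gcd(d,k) = 1 (i.e., a/r lies on the generalised line L(d·c)). -/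
/-! By Dirichlet's pigeonhole principle, the `𝔽_q`-linear map `(u, v) ↦ u a₁ + v a₂ mod r` on
pairs with `deg u ≤ deg r / 2` and `deg v < deg r / 2` has a domain of dimension `deg r + 1` and a
target of dimension `deg r`, so some nonzero `(u, v)` satisfies `r ∣ u a₁ + v a₂`. Writing
`(u, v) = g c` with `c` primitive gives `r ∣ g (c₁ a₁ + c₂ a₂)`, and cancelling the gcd of `g` and
the cofactor yields a monic `d ∣ g` and `k` with `d (c₁ a₁ + c₂ a₂) = k r` and `gcd(d, k) = 1`;
since `d ∣ g`, the heights of `d c` stay below those of `(u, v)`. -/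

set_option autoImplicit false

noncomputable section

open Polynomial Matrix
open scoped Classical

variable {Fq : Type} [Field Fq] [Fintype Fq]

namespace Polynomial

variable {K : Type} [Field K]

lemma exists_ne_zero_dvd_mul_add_mul {r : K[X]} (hr : r ≠ 0) (a₁ a₂ : K[X]) {m₁ m₂ : ℕ}
    (hm : r.natDegree < m₁ + m₂) :
    ∃ u ∈ degreeLT K m₁, ∃ v ∈ degreeLT K m₂, (u, v) ≠ 0 ∧ r ∣ u * a₁ + v * a₂ := by
  have := (AdjoinRoot.powerBasis hr).finite
  let φ : degreeLT K m₁ × degreeLT K m₂ →ₗ[K] AdjoinRoot r :=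
    (AdjoinRoot.mkₐ r).toLinearMap ∘ₗ
      ((LinearMap.mulRight K a₁ ∘ₗ (degreeLT K m₁).subtype).coprod
        (LinearMap.mulRight K a₂ ∘ₗ (degreeLT K m₂).subtype))
  have hker : LinearMap.ker φ ≠ ⊥ := LinearMap.ker_ne_bot_of_finrank_lt <| by
    rwa [(AdjoinRoot.powerBasis hr).finrank, AdjoinRoot.powerBasis_dim, Module.finrank_prod,
      (degreeLTEquiv K m₁).finrank_eq, (degreeLTEquiv K m₂).finrank_eq, Module.finrank_fin_fun,
      Module.finrank_fin_fun]
  obtain ⟨⟨u, v⟩, huv, hne⟩ := (Submodule.ne_bot_iff _).1 hker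
  refine ⟨u, u.2, v, v.2, ?_, AdjoinRoot.mk_eq_zero.1 huv⟩
  simpa [Prod.ext_iff] using hne

lemma exists_monic_isCoprime_mul {p : K[X]} (hp : p ≠ 0) (q : K[X]) :
    ∃ g p' q', g ≠ 0 ∧ p'.Monic ∧ IsCoprime p' q' ∧ p = g * p' ∧ q = g * q' := by
  obtain ⟨p', q', hp', hq', hgcd⟩ := extract_gcd p q
  have hp'0 : p' ≠ 0 := right_ne_zero_of_mul (hp' ▸ hp)
  have hε : p'.leadingCoeff ≠ 0 := leadingCoeff_ne_zero.2 hp'0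
  have hcancel : C p'.leadingCoeff * C p'.leadingCoeff⁻¹ = 1 := by
    rw [← C_mul, mul_inv_cancel₀ hε, C_1]
  refine ⟨gcd p q * C p'.leadingCoeff, p' * C p'.leadingCoeff⁻¹, q' * C p'.leadingCoeff⁻¹,
    mul_ne_zero (left_ne_zero_of_mul (hp' ▸ hp)) (C_ne_zero.2 hε), monic_mul_leadingCoeff_inv hp'0,
    (isCoprime_mul_unit_right (isUnit_C.2 (inv_ne_zero hε).isUnit) _ _).2
      ((gcd_isUnit_iff _ _).1 hgcd), ?_, ?_⟩
  · rwa [mul_mul_mul_comm, hcancel, mul_one]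
  · rwa [mul_mul_mul_comm, hcancel, mul_one]

lemma exists_monic_dvd_isCoprime {g m k r : K[X]} (hg : g ≠ 0) (h : g * m = k * r) :
    ∃ d k', d ∣ g ∧ d.Monic ∧ d * m = k' * r ∧ IsCoprime d k' := by
  obtain ⟨e, d, k', he, hd, hdk, rfl, rfl⟩ := exists_monic_isCoprime_mul hg k
  refine ⟨d, k', dvd_mul_left d e, hd, mul_left_cancel₀ he ?_, hdk⟩
  rw [← mul_assoc, h, mul_assoc, ← mul_assoc]

lemma exists_primitive_mul {u v : K[X]} (huv : (u, v) ≠ 0) :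
    ∃ g c, g ≠ 0 ∧ Primitive c ∧ u = g * c.1 ∧ v = g * c.2 := by
  by_cases hu : u = 0
  · refine ⟨v, (0, 1), fun hv => huv (by simp [hu, hv]),
      ⟨isCoprime_zero_left.2 isUnit_one, .inr ⟨rfl, monic_one⟩⟩, by simp [hu], (mul_one v).symm⟩
  · obtain ⟨g, c₁, c₂, hg, hc₁, hc, rfl, rfl⟩ := exists_monic_isCoprime_mul hu v
    exact ⟨g, (c₁, c₂), hg, ⟨hc, .inl hc₁⟩, rfl, rfl⟩

lemma degree_mul_le_of_dvd {d g : K[X]} (hdg : d ∣ g) (hg : g ≠ 0) (c : K[X]) :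
    (d * c).degree ≤ (g * c).degree := by
  rw [degree_mul, degree_mul]
  gcongr
  exact degree_le_of_dvd hdg hg

end Polynomial

lemma one_lt_card_field : (1 : ℝ) < Fintype.card Fq := by
  exact_mod_cast Fintype.one_lt_card

lemma Oabs_le_sqrt_of_degree_lt {x r : Fq[X]} (hr : r ≠ 0)
    (hx : x.degree < ↑(r.natDegree / 2 + 1)) : Oabs x ≤ √(Oabs r) := by
  rcases eq_or_ne x 0 with rfl | hx0
  · simp [Oabs]
  rw [Oabs, if_neg hx0, Oabs, if_neg hr, Real.le_sqrt' (by positivity), ← pow_mul]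
  have := (natDegree_lt_iff_degree_lt hx0).2 hx
  exact pow_le_pow_right₀ one_lt_card_field.le (by omega)

lemma Oabs_lt_sqrt_of_degree_lt {x r : Fq[X]} (hr : r ≠ 0)
    (hx : x.degree < ↑((r.natDegree + 1) / 2)) : Oabs x < √(Oabs r) := by
  rcases eq_or_ne x 0 with rfl | hx0
  · rw [Oabs, if_pos rfl, Real.sqrt_pos, Oabs, if_neg hr]
    positivity
  rw [Oabs, if_neg hx0, Oabs, if_neg hr, Real.lt_sqrt (by positivity), ← pow_mul]
  have := (natDegree_lt_iff_degree_lt hx0).2 hx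
  exact pow_lt_pow_right₀ one_lt_card_field (by omega)

theorem stmt_9_general (Fq : Type) [Field Fq] [Fintype Fq]
    (r : Fq[X]) (hr : r.Monic)
    (a : Fq[X] × Fq[X]) :
    ∃ c : Fq[X] × Fq[X], ∃ d : Fq[X], ∃ k : Fq[X],
      Primitive c ∧ d.Monic ∧
      Oabs (d * c.1) ≤ Real.sqrt (Oabs r) ∧
      Oabs (d * c.2) < Real.sqrt (Oabs r) ∧
      d * (c.1 * a.1 + c.2 * a.2) = k * r ∧ IsCoprime d k := by
  obtain ⟨u, hu, v, hv, huv, hdvd⟩ := exists_ne_zero_dvd_mul_add_mul hr.ne_zero a.1 a.2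
    (m₁ := r.natDegree / 2 + 1) (m₂ := (r.natDegree + 1) / 2) (by omega)
  obtain ⟨g, c, hg, hc, rfl, rfl⟩ := exists_primitive_mul huv
  obtain ⟨m, hm⟩ : r ∣ g * (c.1 * a.1 + c.2 * a.2) := by
    convert hdvd using 1
    ring
  obtain ⟨d, k, hdg, hd, hdk, hdk_coprime⟩ :=
    exists_monic_dvd_isCoprime hg (hm.trans (mul_comm r m))
  refine ⟨c, d, k, hc, hd, Oabs_le_sqrt_of_degree_lt hr.ne_zero ?_,
    Oabs_lt_sqrt_of_degree_lt hr.ne_zero ?_, hdk, hdk_coprime⟩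
  · exact (degree_mul_le_of_dvd hdg hg _).trans_lt (mem_degreeLT.1 hu)
  · exact (degree_mul_le_of_dvd hdg hg _).trans_lt (mem_degreeLT.1 hv)

/-- Every rational point `a/r` in the unit square lies on a generalised line `L(d·c)`
of height at most `|r|^{1/2}`. -/
theorem stmt_9 (Fq : Type) [Field Fq] [Fintype Fq]
    (r : Fq[X]) (hr : r.Monic)
    (a : Fq[X] × Fq[X]) (ha : Oabs2 a < Oabs r) (hco : CoprimeTriple a.1 a.2 r) :
    ∃ c : Fq[X] × Fq[X], ∃ d : Fq[X], ∃ k : Fq[X],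
      Primitive c ∧ d.Monic ∧
      Oabs (d * c.1) ≤ Real.sqrt (Oabs r) ∧
      Oabs (d * c.2) < Real.sqrt (Oabs r) ∧
      d * (c.1 * a.1 + c.2 * a.2) = k * r ∧ IsCoprime d k :=
  stmt_9_general Fq r hr a
end
end
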